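/- arXiv:2207.03535 — 2 statements merged into one kernel-verified Lean document; each statement's English description precedes it below -/
import Mathlib

section
/- Let λ, μ, ν > 0. With ∇ the unique ℝ-bilinear map satisfying the Koszul formula for (V, h, [·,·]) and R(A,B)C := ∇_A(∇_B C) − ∇_B(∇_A C) − ∇_{[A,B]} C, the Lorentzian Berger sphere satisfies h(R(X,Y)Y, X) = ((λ²+μ²−ν²)² + 4ν²(μ²−ν²))/(λμν)², h(R(X,Z)Z, X) = ((λ²−μ²+ν²)² − 4μ²(μ²−ν²))/(λμν)², and h(R(Y,Z)Z, Y) = ((λ²+μ²+ν²)² + 2(λ⁴−μ⁴−ν⁴))/(λμν)². -/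
/-- The Lorentzian scalar product on `ℝ³` with `h(X,X) = −1`, `h(Y,Y) = h(Z,Z) = 1`. -/
def hLor (v w : Fin 3 → ℝ) : ℝ := -(v 0 * w 0) + v 1 * w 1 + v 2 * w 2

/-!
The frame `e₀, e₁, e₂` is `h`-orthonormal with `e₀` timelike, so `∇_A B` is recovered from the
three numbers `h(∇_A B, eᵢ)`, which the Koszul formula gives in terms of the bracket. For a bracket
with `[e₀,e₁] = a e₂`, `[e₂,e₀] = b e₁`, `[e₁,e₂] = c e₀` this makes `∇` and hence the curvature
components explicit polynomials in `a, b, c`; the theorem is the case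
`a = 2ν/(λμ)`, `b = 2μ/(λν)`, `c = 2λ/(μν)`.
-/

local notation "e₀" => (![1, 0, 0] : Fin 3 → ℝ)
local notation "e₁" => (![0, 1, 0] : Fin 3 → ℝ)
local notation "e₂" => (![0, 0, 1] : Fin 3 → ℝ)

@[simp] lemma hLor_e₀ (v : Fin 3 → ℝ) : hLor v e₀ = -v 0 := by simp [hLor]
@[simp] lemma hLor_e₁ (v : Fin 3 → ℝ) : hLor v e₁ = v 1 := by simp [hLor]
@[simp] lemma hLor_e₂ (v : Fin 3 → ℝ) : hLor v e₂ = v 2 := by simp [hLor]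

lemma vec3_eq_sum_smul (v : Fin 3 → ℝ) : v = v 0 • e₀ + v 1 • e₁ + v 2 • e₂ := by
  ext i; fin_cases i <;> simp

section LeviCivita

variable (bracket nabla : (Fin 3 → ℝ) →ₗ[ℝ] (Fin 3 → ℝ) →ₗ[ℝ] (Fin 3 → ℝ))

def koszulForm (A B C : Fin 3 → ℝ) : ℝ :=
  hLor C (bracket A B) + hLor B (bracket C A) - hLor A (bracket B C)

def IsKoszulConnection : Prop :=
  ∀ A B C, 2 * hLor (nabla A B) C = koszulForm bracket A B C

def curvature (A B C : Fin 3 → ℝ) : Fin 3 → ℝ :=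
  nabla A (nabla B C) - nabla B (nabla A C) - nabla (bracket A B) C

variable {bracket nabla}

lemma IsKoszulConnection.apply_eq (hK : IsKoszulConnection bracket nabla) (A B : Fin 3 → ℝ) :
    nabla A B = (2⁻¹ : ℝ) •
      ![-koszulForm bracket A B e₀, koszulForm bracket A B e₁, koszulForm bracket A B e₂] := by
  ext i
  fin_cases i <;> simp [← hK A B]

end LeviCivita

structure IsMilnorBracket (bracket : (Fin 3 → ℝ) →ₗ[ℝ] (Fin 3 → ℝ) →ₗ[ℝ] (Fin 3 → ℝ))
    (a b c : ℝ) : Prop where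
  apply_self : ∀ v, bracket v v = 0
  e₀_e₁ : bracket e₀ e₁ = a • e₂
  e₂_e₀ : bracket e₂ e₀ = b • e₁
  e₁_e₂ : bracket e₁ e₂ = c • e₀

namespace IsMilnorBracket

variable {bracket nabla : (Fin 3 → ℝ) →ₗ[ℝ] (Fin 3 → ℝ) →ₗ[ℝ] (Fin 3 → ℝ)} {a b c : ℝ}

lemma apply_swap (hb : IsMilnorBracket bracket a b c) (v w : Fin 3 → ℝ) :
    bracket w v = -bracket v w := by
  have h := hb.apply_self (v + w)
  simp only [map_add, LinearMap.add_apply, hb.apply_self, zero_add, add_zero] at h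
  exact eq_neg_of_add_eq_zero_left h

lemma apply_eq (hb : IsMilnorBracket bracket a b c) (v w : Fin 3 → ℝ) :
    bracket v w =
      ![c * (v 1 * w 2 - v 2 * w 1), b * (v 2 * w 0 - v 0 * w 2), a * (v 0 * w 1 - v 1 * w 0)] := by
  rw [vec3_eq_sum_smul v, vec3_eq_sum_smul w]
  simp only [map_add, map_smul, LinearMap.add_apply, LinearMap.smul_apply, hb.apply_self,
    hb.e₀_e₁, hb.e₂_e₀, hb.e₁_e₂, hb.apply_swap e₀ e₁, hb.apply_swap e₂ e₀, hb.apply_swap e₁ e₂]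
  ext i
  fin_cases i <;> simp <;> ring

lemma nabla_apply_eq (hb : IsMilnorBracket bracket a b c)
    (hK : IsKoszulConnection bracket nabla) (v w : Fin 3 → ℝ) :
    nabla v w =
      ![((b + c - a) * v 1 * w 2 + (b - a - c) * v 2 * w 1) / 2,
        ((b - a - c) * v 2 * w 0 - (a + b + c) * v 0 * w 2) / 2,
        ((a + b + c) * v 0 * w 1 + (b + c - a) * v 1 * w 0) / 2] := by
  rw [hK.apply_eq]
  ext i
  fin_cases i <;> simp [koszulForm, hLor, hb.apply_eq] <;> ring

lemma hLor_curvature_e₀_e₁ (hb : IsMilnorBracket bracket a b c)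
    (hK : IsKoszulConnection bracket nabla) :
    hLor (curvature bracket nabla e₀ e₁ e₁) e₀ =
      ((b + c) ^ 2 + 2 * a * (b - c) - 3 * a ^ 2) / 4 := by
  simp [curvature, hLor, hb.nabla_apply_eq hK, hb.apply_eq]
  ring

lemma hLor_curvature_e₀_e₂ (hb : IsMilnorBracket bracket a b c)
    (hK : IsKoszulConnection bracket nabla) :
    hLor (curvature bracket nabla e₀ e₂ e₂) e₀ =
      ((a + c) ^ 2 + 2 * b * (a - c) - 3 * b ^ 2) / 4 := by
  simp [curvature, hLor, hb.nabla_apply_eq hK, hb.apply_eq]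
  ring

lemma hLor_curvature_e₁_e₂ (hb : IsMilnorBracket bracket a b c)
    (hK : IsKoszulConnection bracket nabla) :
    hLor (curvature bracket nabla e₁ e₂ e₂) e₁ =
      (3 * c ^ 2 + 2 * c * (a + b) - (a - b) ^ 2) / 4 := by
  simp [curvature, hLor, hb.nabla_apply_eq hK, hb.apply_eq]
  ring

end IsMilnorBracket

theorem sectional_curvature_lorentzian_berger_sphere_general
    (l m n : ℝ)
    (X Y Z : Fin 3 → ℝ) (hX : X = ![1, 0, 0]) (hY : Y = ![0, 1, 0]) (hZ : Z = ![0, 0, 1])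
    (bracket : (Fin 3 → ℝ) →ₗ[ℝ] (Fin 3 → ℝ) →ₗ[ℝ] (Fin 3 → ℝ))
    (halt : ∀ v, bracket v v = 0)
    (hXY : bracket X Y = (2 * n / (l * m)) • Z)
    (hZX : bracket Z X = (2 * m / (l * n)) • Y)
    (hYZ : bracket Y Z = (2 * l / (m * n)) • X)
    (nabla : (Fin 3 → ℝ) →ₗ[ℝ] (Fin 3 → ℝ) →ₗ[ℝ] (Fin 3 → ℝ))
    (hKoszul : ∀ A B C, 2 * hLor (nabla A B) C =
      hLor C (bracket A B) + hLor B (bracket C A) - hLor A (bracket B C))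
    (R : (Fin 3 → ℝ) → (Fin 3 → ℝ) → (Fin 3 → ℝ) → (Fin 3 → ℝ))
    (hR : ∀ A B C, R A B C = nabla A (nabla B C) - nabla B (nabla A C) - nabla (bracket A B) C) :
    hLor (R X Y Y) X = ((l ^ 2 + m ^ 2 - n ^ 2) ^ 2 + 4 * n ^ 2 * (m ^ 2 - n ^ 2)) / (l * m * n) ^ 2 ∧
    hLor (R X Z Z) X = ((l ^ 2 - m ^ 2 + n ^ 2) ^ 2 - 4 * m ^ 2 * (m ^ 2 - n ^ 2)) / (l * m * n) ^ 2 ∧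
    hLor (R Y Z Z) Y = ((l ^ 2 + m ^ 2 + n ^ 2) ^ 2 + 2 * (l ^ 4 - m ^ 4 - n ^ 4)) / (l * m * n) ^ 2 := by
  subst hX hY hZ
  have hb : IsMilnorBracket bracket (2 * n / (l * m)) (2 * m / (l * n)) (2 * l / (m * n)) :=
    ⟨halt, hXY, hZX, hYZ⟩
  obtain rfl : R = curvature bracket nabla := by
    funext A B C
    exact hR A B C
  rw [hb.hLor_curvature_e₀_e₁ hKoszul, hb.hLor_curvature_e₀_e₂ hKoszul,
    hb.hLor_curvature_e₁_e₂ hKoszul]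
  refine ⟨?_, ?_, ?_⟩ <;> field_simp <;> ring

theorem sectional_curvature_lorentzian_berger_sphere
    (l m n : ℝ) (hl : 0 < l) (hm : 0 < m) (hn : 0 < n)
    (X Y Z : Fin 3 → ℝ) (hX : X = ![1, 0, 0]) (hY : Y = ![0, 1, 0]) (hZ : Z = ![0, 0, 1])
    (bracket : (Fin 3 → ℝ) →ₗ[ℝ] (Fin 3 → ℝ) →ₗ[ℝ] (Fin 3 → ℝ))
    (halt : ∀ v, bracket v v = 0)
    (hXY : bracket X Y = (2 * n / (l * m)) • Z)
    (hZX : bracket Z X = (2 * m / (l * n)) • Y)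
    (hYZ : bracket Y Z = (2 * l / (m * n)) • X)
    (nabla : (Fin 3 → ℝ) →ₗ[ℝ] (Fin 3 → ℝ) →ₗ[ℝ] (Fin 3 → ℝ))
    (hKoszul : ∀ A B C, 2 * hLor (nabla A B) C =
      hLor C (bracket A B) + hLor B (bracket C A) - hLor A (bracket B C))
    (R : (Fin 3 → ℝ) → (Fin 3 → ℝ) → (Fin 3 → ℝ) → (Fin 3 → ℝ))
    (hR : ∀ A B C, R A B C = nabla A (nabla B C) - nabla B (nabla A C) - nabla (bracket A B) C) :
    hLor (R X Y Y) X = ((l ^ 2 + m ^ 2 - n ^ 2) ^ 2 + 4 * n ^ 2 * (m ^ 2 - n ^ 2)) / (l * m * n) ^ 2 ∧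
    hLor (R X Z Z) X = ((l ^ 2 - m ^ 2 + n ^ 2) ^ 2 - 4 * m ^ 2 * (m ^ 2 - n ^ 2)) / (l * m * n) ^ 2 ∧
    hLor (R Y Z Z) Y = ((l ^ 2 + m ^ 2 + n ^ 2) ^ 2 + 2 * (l ^ 4 - m ^ 4 - n ^ 4)) / (l * m * n) ^ 2 :=
  sectional_curvature_lorentzian_berger_sphere_general l m n X Y Z hX hY hZ bracket halt hXY hZX hYZ
    nabla hKoszul R hR
end

section
/- Let λ, μ, ν > 0, θ ∈ (0, π/2), α, β ∈ ℝ. Let p = (cos θ·e^{iα}, sin θ·e^{iβ}) ∈ S³, ∂α = (i·cos θ·e^{iα}, 0), ∂β = (0, i·sin θ·e^{iβ}), Y_p = μ⁻¹·p·(0,−1), Z_p = ν⁻¹·p·(0,i), and D = μ²·sin²(α+β) + ν²·cos²(α+β). Set w = (sin θ·cos θ/D)·(μ²ν·sin(α+β)·Z_p − μν²·cos(α+β)·Y_p). Then: (i) (−cos θ·e^{iα}, 0) − w lies in the real span of {∂α, ∂β, p}; (ii) (0, −sin θ·e^{iβ}) + w lies in the real span of {∂α, ∂β, p}; (iii) g_p(w,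 ∂α) = g_p(w, ∂β) = g_p(w, p) = 0. (Hence w = B_g(∂α, ∂α) = −B_g(∂β, ∂β) is the second fundamental form of the torus T_θ² in (S³,g).) -/
/-!
Everything is computed after left translation by `p⁻¹`, where the Berger metric becomes the fixed
diagonal form `λ² Im X₁ Im Y₁ + μ² Re X₂ Re Y₂ + ν² Im X₂ Im Y₂ + Re X₁ Re Y₁`. Writing
`p = (z₁, z₂)` and `ζ = z₁ z₂`, the vectors `∂α, ∂β, p` translate to `(i|z₁|², -iζ), (i|z₂|², iζ), (1, 0)`
and `w` to the vertical vector `(0, ζ (1 + t i))` with `t = (μ² - ν²) sin(α+β) cos(α+β) / D`.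
Because `1 + t i` has real part `1`, the vectors in (i) and (ii) are explicit real combinations
of `∂α, ∂β, p`; and `t` is exactly the solution of `μ² Re ω Im ζ = ν² Im ω Re ζ` for `ω = ζ (1 + t i)`,
which says that `(0, ω)` is orthogonal to `(0, iζ)`.
-/

open Complex Real

/-- The group multiplication of `S³ ⊂ ℂ²`, extended ℝ-bilinearly to all of `ℂ²`. -/
def s3mul (p q : ℂ × ℂ) : ℂ × ℂ :=
  (p.1 * q.1 - (starRingEnd ℂ) p.2 * q.2, (starRingEnd ℂ) p.1 * q.2 + p.2 * q.1)

/-- The inverse `p⁻¹ = (conj z, −w)` of `p = (z,w) ∈ S³`. -/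
def s3inv (p : ℂ × ℂ) : ℂ × ℂ := ((starRingEnd ℂ) p.1, -p.2)

/-- The standard real inner product on `ℂ² ≅ ℝ⁴`. -/
def rip (a b : ℂ × ℂ) : ℝ := (a.1 * (starRingEnd ℂ) b.1 + a.2 * (starRingEnd ℂ) b.2).re

/-- The generalised Riemannian Berger metric on `S³` with parameters `l, m, n`,
evaluated at `p` on tangent vectors `A, B`. -/
def bergerG (l m n : ℝ) (p A B : ℂ × ℂ) : ℝ :=
  l ^ 2 * rip (s3mul (s3inv p) A) (Complex.I, 0) * rip (s3mul (s3inv p) B) (Complex.I, 0)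
  + m ^ 2 * rip (s3mul (s3inv p) A) (0, -1) * rip (s3mul (s3inv p) B) (0, -1)
  + n ^ 2 * rip (s3mul (s3inv p) A) (0, Complex.I) * rip (s3mul (s3inv p) B) (0, Complex.I)
  + rip (s3mul (s3inv p) A) (1, 0) * rip (s3mul (s3inv p) B) (1, 0)

open ComplexConjugate

section LeftTranslation

variable (p : ℂ × ℂ)

lemma s3mul_zero_mk (ω : ℂ) : s3mul p (0, ω) = (-(conj p.2 * ω), conj p.1 * ω) := by
  simp [s3mul]

lemma s3mul_s3inv_mk_zero (z : ℂ) : s3mul (s3inv p) (z, 0) = (conj p.1 * z, -(p.2 * z)) := by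
  simp [s3mul, s3inv]

lemma s3mul_s3inv_zero_mk (z : ℂ) : s3mul (s3inv p) (0, z) = (conj p.2 * z, p.1 * z) := by
  simp [s3mul, s3inv]

lemma s3mul_s3inv_self_snd : (s3mul (s3inv p) p).2 = 0 := by
  simp [s3mul, s3inv, mul_comm]

lemma s3mul_s3inv_s3mul (V : ℂ × ℂ) :
    s3mul (s3inv p) (s3mul p V) = (normSq p.1 + normSq p.2) • V := by
  ext <;> simp only [s3mul, s3inv, conj_conj, map_neg, Prod.smul_fst,
    Prod.smul_snd, Complex.real_smul, ofReal_add, normSq_eq_conj_mul_self] <;> ring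

end LeftTranslation

def bergerForm (l m n : ℝ) (X Y : ℂ × ℂ) : ℝ :=
  l ^ 2 * X.1.im * Y.1.im + m ^ 2 * X.2.re * Y.2.re + n ^ 2 * X.2.im * Y.2.im + X.1.re * Y.1.re

lemma bergerG_eq_bergerForm (l m n : ℝ) (p A B : ℂ × ℂ) :
    bergerG l m n p A B = bergerForm l m n (s3mul (s3inv p) A) (s3mul (s3inv p) B) := by
  simp [bergerG, bergerForm, rip]

lemma bergerForm_zero_mk_eq_zero (l m n : ℝ) {ζ ω : ℂ}
    (hω : m ^ 2 * ω.re * ζ.im = n ^ 2 * ω.im * ζ.re) (r : ℝ) {Y : ℂ × ℂ}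
    (hY : Y.2 = r * I * ζ) : bergerForm l m n (0, ω) Y = 0 := by
  simp only [bergerForm, hY, mul_re, mul_im, ofReal_re, ofReal_im, I_re, I_im, zero_re, zero_im]
  linear_combination -r * hω

section UnitPoint

variable {p : ℂ × ℂ}

lemma conj_fst_mul_add_conj_snd_mul (hp : normSq p.1 + normSq p.2 = 1) :
    conj p.1 * p.1 + conj p.2 * p.2 = 1 := by
  simpa [normSq_eq_conj_mul_self] using congrArg ((↑) : ℝ → ℂ) hp

lemma neg_fst_sub_s3mul_mem_span (hp : normSq p.1 + normSq p.2 = 1) (t : ℝ) :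
    (-p.1, 0) - s3mul p (0, p.1 * p.2 * (1 + t * I)) ∈
      Submodule.span ℝ ({(I * p.1, 0), (0, I * p.2), p} : Set (ℂ × ℂ)) := by
  refine Submodule.mem_span_triple.2
    ⟨t * normSq p.2, -(t * normSq p.1), -normSq p.1, ?_⟩
  have hp' := conj_fst_mul_add_conj_snd_mul hp
  ext <;> simp only [s3mul_zero_mk, Prod.fst_add, Prod.snd_add, Prod.fst_sub, Prod.snd_sub,
    Prod.smul_fst, Prod.smul_snd, real_smul, ofReal_mul, ofReal_neg, normSq_eq_conj_mul_self]
  · linear_combination (-p.1) * hp'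
  · ring

lemma neg_snd_add_s3mul_mem_span (hp : normSq p.1 + normSq p.2 = 1) (t : ℝ) :
    (0, -p.2) + s3mul p (0, p.1 * p.2 * (1 + t * I)) ∈
      Submodule.span ℝ ({(I * p.1, 0), (0, I * p.2), p} : Set (ℂ × ℂ)) := by
  refine Submodule.mem_span_triple.2
    ⟨-(t * normSq p.2), t * normSq p.1, -normSq p.2, ?_⟩
  have hp' := conj_fst_mul_add_conj_snd_mul hp
  ext <;> simp only [s3mul_zero_mk, Prod.fst_add, Prod.snd_add, Prod.smul_fst, Prod.smul_snd,
    real_smul, ofReal_mul, ofReal_neg, normSq_eq_conj_mul_self]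
  · ring
  · linear_combination (-p.2) * hp'

lemma bergerG_s3mul_eq_zero (hp : normSq p.1 + normSq p.2 = 1) (l m n : ℝ) {ω : ℂ}
    (hω : m ^ 2 * ω.re * (p.1 * p.2).im = n ^ 2 * ω.im * (p.1 * p.2).re) :
    bergerG l m n p (s3mul p (0, ω)) (I * p.1, 0) = 0 ∧
    bergerG l m n p (s3mul p (0, ω)) (0, I * p.2) = 0 ∧
    bergerG l m n p (s3mul p (0, ω)) p = 0 := by
  simp only [bergerG_eq_bergerForm, s3mul_s3inv_s3mul, hp, one_smul]
  refine ⟨bergerForm_zero_mk_eq_zero l m n hω (-1) ?_, bergerForm_zero_mk_eq_zero l m n hω 1 ?_,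
    bergerForm_zero_mk_eq_zero l m n hω 0 ?_⟩
  · simp only [s3mul_s3inv_mk_zero]
    push_cast
    ring
  · simp only [s3mul_s3inv_zero_mk]
    push_cast
    ring
  · simp [s3mul_s3inv_self_snd]

end UnitPoint

lemma normSq_torus (θ α β : ℝ) :
    normSq ((Real.cos θ : ℂ) * Complex.exp (α * I)) +
      normSq ((Real.sin θ : ℂ) * Complex.exp (β * I)) = 1 := by
  simp only [normSq_mul, normSq_ofReal, normSq_eq_norm_sq (Complex.exp _), norm_exp_ofReal_mul_I]
  linear_combination Real.cos_sq_add_sin_sq θ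

lemma torus_fst_mul_snd (θ α β : ℝ) :
    (Real.cos θ : ℂ) * Complex.exp (α * I) * ((Real.sin θ : ℂ) * Complex.exp (β * I)) =
      (Real.sin θ * Real.cos θ : ℝ) * Complex.exp ((α + β : ℝ) * I) := by
  rw [ofReal_add, add_mul, Complex.exp_add]
  push_cast
  ring

lemma sq_mul_sin_sq_add_sq_mul_cos_sq_pos {m n : ℝ} (hm : 0 < m) (hn : 0 < n) (s : ℝ) :
    0 < m ^ 2 * Real.sin s ^ 2 + n ^ 2 * Real.cos s ^ 2 := by
  have := Real.sin_sq_add_cos_sq s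
  rcases le_total (m ^ 2) (n ^ 2) with h | h <;> nlinarith [pow_pos hm 2, pow_pos hn 2]

lemma ofReal_mul_exp_mul_one_add_mul_I (k s : ℝ) {m n D : ℝ}
    (hD : D = m ^ 2 * Real.sin s ^ 2 + n ^ 2 * Real.cos s ^ 2) (hD0 : D ≠ 0) :
    (k : ℂ) * Complex.exp (s * I) * (1 + ((m ^ 2 - n ^ 2) * Real.sin s * Real.cos s / D : ℝ) * I) =
      (k / D : ℝ) * ((n ^ 2 * Real.cos s : ℝ) + (m ^ 2 * Real.sin s : ℝ) * I) := by
  have hpyth := Real.sin_sq_add_cos_sq s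
  apply Complex.ext <;>
    simp only [mul_re, mul_im, exp_ofReal_mul_I_re, exp_ofReal_mul_I_im, add_re, add_im,
      one_re, one_im, ofReal_re, ofReal_im, I_re, I_im] <;>
    field_simp <;> rw [hD]
  · linear_combination k * Real.cos s * n ^ 2 * hpyth
  · linear_combination k * Real.sin s * m ^ 2 * hpyth

theorem second_fundamental_form_of_torus_in_riemannian_berger_sphere_general
    (l m n : ℝ) (hm : 0 < m) (hn : 0 < n)
    (θ : ℝ) (α β : ℝ)
    (p dα dβ Yp Zp : ℂ × ℂ)
    (hp : p = ((Real.cos θ : ℂ) * Complex.exp (α * Complex.I),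
               (Real.sin θ : ℂ) * Complex.exp (β * Complex.I)))
    (hdα : dα = (Complex.I * (Real.cos θ : ℂ) * Complex.exp (α * Complex.I), (0 : ℂ)))
    (hdβ : dβ = ((0 : ℂ), Complex.I * (Real.sin θ : ℂ) * Complex.exp (β * Complex.I)))
    (hYp : Yp = (m⁻¹ : ℝ) • s3mul p ((0 : ℂ), (-1 : ℂ)))
    (hZp : Zp = (n⁻¹ : ℝ) • s3mul p ((0 : ℂ), Complex.I))
    (D : ℝ) (hD : D = m ^ 2 * Real.sin (α + β) ^ 2 + n ^ 2 * Real.cos (α + β) ^ 2)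
    (w : ℂ × ℂ)
    (hw : w = (Real.sin θ * Real.cos θ / D) •
      ((m ^ 2 * n * Real.sin (α + β)) • Zp - (m * n ^ 2 * Real.cos (α + β)) • Yp)) :
    ((-(Real.cos θ : ℂ) * Complex.exp (α * Complex.I), (0 : ℂ)) - w
        ∈ Submodule.span ℝ ({dα, dβ, p} : Set (ℂ × ℂ))) ∧
    (((0 : ℂ), -(Real.sin θ : ℂ) * Complex.exp (β * Complex.I)) + w
        ∈ Submodule.span ℝ ({dα, dβ, p} : Set (ℂ × ℂ))) ∧
    (bergerG l m n p w dα = 0 ∧ bergerG l m n p w dβ = 0 ∧ bergerG l m n p w p = 0) := by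
  have hD0 : D ≠ 0 := hD ▸ (sq_mul_sin_sq_add_sq_mul_cos_sq_pos hm hn (α + β)).ne'
  set t := (m ^ 2 - n ^ 2) * Real.sin (α + β) * Real.cos (α + β) / D
  have hζ : p.1 * p.2 = (Real.sin θ * Real.cos θ : ℝ) * Complex.exp ((α + β : ℝ) * I) :=
    hp ▸ torus_fst_mul_snd θ α β
  have hω : p.1 * p.2 * (1 + t * I) = (Real.sin θ * Real.cos θ / D : ℝ) *
      ((n ^ 2 * Real.cos (α + β) : ℝ) + (m ^ 2 * Real.sin (α + β) : ℝ) * I) :=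
    hζ ▸ ofReal_mul_exp_mul_one_add_mul_I _ _ hD hD0
  have hw' : w = s3mul p (0, p.1 * p.2 * (1 + t * I)) := by
    rw [hω, hw, hZp, hYp, smul_smul, smul_smul,
      show m ^ 2 * n * Real.sin (α + β) * n⁻¹ = m ^ 2 * Real.sin (α + β) by field_simp,
      show m * n ^ 2 * Real.cos (α + β) * m⁻¹ = n ^ 2 * Real.cos (α + β) by field_simp]
    ext <;> simp only [s3mul_zero_mk, Prod.smul_mk, Prod.mk_sub_mk, real_smul] <;> push_cast <;> ring
  have horth : m ^ 2 * (p.1 * p.2 * (1 + t * I)).re * (p.1 * p.2).im =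
      n ^ 2 * (p.1 * p.2 * (1 + t * I)).im * (p.1 * p.2).re := by
    rw [hω, hζ]
    simp only [re_ofReal_mul, im_ofReal_mul, add_re, add_im, mul_I_re, mul_I_im, ofReal_re,
      ofReal_im, exp_ofReal_mul_I_re, exp_ofReal_mul_I_im]
    ring
  have hunit : normSq p.1 + normSq p.2 = 1 := hp ▸ normSq_torus θ α β
  obtain rfl : dα = (I * p.1, 0) := by rw [hdα, hp, mul_assoc]
  obtain rfl : dβ = (0, I * p.2) := by rw [hdβ, hp, mul_assoc]
  rw [hw', show -(Real.cos θ : ℂ) * Complex.exp (α * I) = -p.1 by rw [hp, neg_mul],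
    show -(Real.sin θ : ℂ) * Complex.exp (β * I) = -p.2 by rw [hp, neg_mul]]
  exact ⟨neg_fst_sub_s3mul_mem_span hunit t, neg_snd_add_s3mul_mem_span hunit t,
    bergerG_s3mul_eq_zero hunit l m n horth⟩

theorem second_fundamental_form_of_torus_in_riemannian_berger_sphere
    (l m n : ℝ) (hl : 0 < l) (hm : 0 < m) (hn : 0 < n)
    (θ : ℝ) (hθ : θ ∈ Set.Ioo 0 (π / 2)) (α β : ℝ)
    (p dα dβ Yp Zp : ℂ × ℂ)
    (hp : p = ((Real.cos θ : ℂ) * Complex.exp (α * Complex.I),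
               (Real.sin θ : ℂ) * Complex.exp (β * Complex.I)))
    (hdα : dα = (Complex.I * (Real.cos θ : ℂ) * Complex.exp (α * Complex.I), (0 : ℂ)))
    (hdβ : dβ = ((0 : ℂ), Complex.I * (Real.sin θ : ℂ) * Complex.exp (β * Complex.I)))
    (hYp : Yp = (m⁻¹ : ℝ) • s3mul p ((0 : ℂ), (-1 : ℂ)))
    (hZp : Zp = (n⁻¹ : ℝ) • s3mul p ((0 : ℂ), Complex.I))
    (D : ℝ) (hD : D = m ^ 2 * Real.sin (α + β) ^ 2 + n ^ 2 * Real.cos (α + β) ^ 2)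
    (w : ℂ × ℂ)
    (hw : w = (Real.sin θ * Real.cos θ / D) •
      ((m ^ 2 * n * Real.sin (α + β)) • Zp - (m * n ^ 2 * Real.cos (α + β)) • Yp)) :
    ((-(Real.cos θ : ℂ) * Complex.exp (α * Complex.I), (0 : ℂ)) - w
        ∈ Submodule.span ℝ ({dα, dβ, p} : Set (ℂ × ℂ))) ∧
    (((0 : ℂ), -(Real.sin θ : ℂ) * Complex.exp (β * Complex.I)) + w
        ∈ Submodule.span ℝ ({dα, dβ, p} : Set (ℂ × ℂ))) ∧
    (bergerG l m n p w dα = 0 ∧ bergerG l m n p w dβ = 0 ∧ bergerG l m n p w p = 0) :=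
  second_fundamental_form_of_torus_in_riemannian_berger_sphere_general l m n hm hn θ α β p dα dβ Yp
    Zp hp hdα hdβ hYp hZp D hD w hw
end
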